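/- For λ₁, λ₂ ≥ 0 with (λ₁,λ₂) ≠ (0,0) and t > 0: ∫_0^t e^{-s(λ₁+λ₂)} ds = (1 - e^{-t(λ₁+λ₂)})/(λ₁+λ₂). Moreover, for an L²-orthonormal family (e_n) with Qe_n having coefficients ⟨e_{n₁}, Q e_{n₂}⟩, the variance of the Gaussian random variable ⟨f, w(·,t)⟩, where w(x,t) = w(x,0) + drift + σ∫_0^t e^{(t-s)Δ} Q^{1/2} dW_s with Δ the Neumann Laplacian on [0,L], equals σ² Σ_{i} ζ_i ( a₀² ⟨e₀,b_i⟩² t + Σ_{(n₁,n₂)≠(0,0)} a_{n₁}a_{n₂} ((1-e^{-t(λ_{n₁}+λ_{n₂})})/(λ_{n₁}+λ_{n₂})) ⟨e_{n₁},b_i⟩⟨e_{n₂},b_i⟩ ), with a_n = ⟨e_n, f⟩. -/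

import Mathlib

open Real MeasureTheory

/-! Expanding each `⟨f, e^{sΔ} bᵢ⟩ = Σₙ aₙ e^{-sλₙ} cₙᵢ` and squaring gives a double series over
`(n₁, n₂)` with terms `aₙ₁ aₙ₂ cₙ₁ᵢ cₙ₂ᵢ e^{-s(λₙ₁ + λₙ₂)}`, dominated for all `s ≥ 0` by the summable
`|aₙ₁ cₙ₁ᵢ| |aₙ₂ cₙ₂ᵢ|`, so it can be integrated term by term. Since `λ₀ = 0` is the only vanishing
eigenvalue, `(0, 0)` is the only index with `λₙ₁ + λₙ₂ = 0`; it contributes `a₀² c₀ᵢ² t`, and every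
other term integrates to `(1 - e^{-t(λₙ₁ + λₙ₂)}) / (λₙ₁ + λₙ₂)`. -/

lemma integral_exp_neg_mul (t : ℝ) {l : ℝ} (hl : l ≠ 0) :
    ∫ s in (0:ℝ)..t, exp (-s * l) = (1 - exp (-t * l)) / l := by
  have h := intervalIntegral.integral_comp_mul_right (a := 0) (b := t) exp (neg_ne_zero.mpr hl)
  simp only [zero_mul, integral_exp, exp_zero, smul_eq_mul] at h
  simp_rw [neg_mul_comm, h]
  field_simp
  ring

lemma abs_mul_exp_neg_mul_le (x : ℝ) {s l : ℝ} (hs : 0 ≤ s) (hl : 0 ≤ l) :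
    |x * exp (-s * l)| ≤ |x| := by
  rw [abs_mul, abs_of_pos (exp_pos _)]
  exact mul_le_of_le_one_right (abs_nonneg x) (exp_le_one_iff.mpr (by nlinarith))

section ExpSeries

variable {ι : Type*} {x lam : ι → ℝ}

lemma continuousOn_tsum_mul_exp_neg_mul (hlam : ∀ n, 0 ≤ lam n)
    (hx : Summable fun n => |x n|) :
    ContinuousOn (fun s => ∑' n, x n * exp (-s * lam n)) (Set.Ici 0) :=
  continuousOn_tsum (fun n => by fun_prop) hx
    fun n s hs => abs_mul_exp_neg_mul_le (x n) hs (hlam n)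

lemma hasSum_integral_sq_tsum_mul_exp_neg_mul [Countable ι] (hlam : ∀ n, 0 ≤ lam n)
    (hx : Summable fun n => |x n|) {t : ℝ} (ht : 0 ≤ t) :
    HasSum (fun p : ι × ι => x p.1 * x p.2 * ∫ s in (0:ℝ)..t, exp (-s * (lam p.1 + lam p.2)))
      (∫ s in (0:ℝ)..t, (∑' n, x n * exp (-s * lam n)) ^ 2) := by
  have hprod : ∀ (p : ι × ι) (s : ℝ), x p.1 * exp (-s * lam p.1) * (x p.2 * exp (-s * lam p.2))
      = x p.1 * x p.2 * exp (-s * (lam p.1 + lam p.2)) := fun p s => by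
    rw [mul_add, exp_add]; ring
  simp_rw [← intervalIntegral.integral_const_mul, ← hprod]
  refine intervalIntegral.hasSum_integral_of_dominated_convergence
    (fun p _ => |x p.1| * |x p.2|) (fun p => by fun_prop) (fun p => ?_) ?_ ?_ ?_
  · refine Filter.Eventually.of_forall fun s hs => ?_
    have hs0 : 0 ≤ s := (Set.uIoc_of_le ht ▸ hs).1.le
    rw [norm_mul]
    exact mul_le_mul (abs_mul_exp_neg_mul_le _ hs0 (hlam _))
      (abs_mul_exp_neg_mul_le _ hs0 (hlam _)) (norm_nonneg _) (abs_nonneg _)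
  · have habs : Summable fun n => ‖|x n|‖ := by simpa only [Real.norm_eq_abs, abs_abs] using hx
    exact Filter.Eventually.of_forall fun s _ => summable_mul_of_summable_norm habs habs
  · exact intervalIntegrable_const
  · refine Filter.Eventually.of_forall fun s hs => ?_
    have hs0 : 0 ≤ s := (Set.uIoc_of_le ht ▸ hs).1.le
    have hnorm : Summable fun n => ‖x n * exp (-s * lam n)‖ :=
      hx.of_nonneg_of_le (fun n => norm_nonneg _) fun n =>
        (Real.norm_eq_abs _).trans_le (abs_mul_exp_neg_mul_le _ hs0 (hlam n))
    have h := hnorm.of_norm.hasSum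
    rw [sq]
    have hmul := h.mul h (summable_mul_of_summable_norm (f := fun n => x n * exp (-s * lam n))
      (g := fun n => x n * exp (-s * lam n)) hnorm hnorm)
    exact hmul

lemma integral_sq_tsum_mul_exp_neg_mul [Countable ι] [DecidableEq ι] {o : ι} (hlam_o : lam o = 0)
    (hlam_pos : ∀ n ≠ o, 0 < lam n) (hx : Summable fun n => |x n|) {t : ℝ} (ht : 0 ≤ t) :
    ∫ s in (0:ℝ)..t, (∑' n, x n * exp (-s * lam n)) ^ 2
      = x o ^ 2 * t + ∑' p : ι × ι, if p ≠ (o, o) then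
          x p.1 * x p.2 * ((1 - exp (-t * (lam p.1 + lam p.2))) / (lam p.1 + lam p.2))
        else 0 := by
  have hlam : ∀ n, 0 ≤ lam n := fun n => by
    rcases eq_or_ne n o with rfl | hn
    exacts [hlam_o.ge, (hlam_pos n hn).le]
  have hne_zero : ∀ p : ι × ι, p ≠ (o, o) → lam p.1 + lam p.2 ≠ 0 := by
    rintro ⟨n₁, n₂⟩ hp
    rcases eq_or_ne n₁ o with rfl | h₁
    · have h₂ : n₂ ≠ n₁ := fun h => hp (by rw [h])
      exact (add_pos_of_nonneg_of_pos (hlam _) (hlam_pos n₂ h₂)).ne'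
    · exact (add_pos_of_pos_of_nonneg (hlam_pos n₁ h₁) (hlam _)).ne'
  have hS := hasSum_integral_sq_tsum_mul_exp_neg_mul hlam hx ht
  rw [← hS.tsum_eq, hS.summable.tsum_eq_add_tsum_ite (o, o)]
  congr 1
  · simp [hlam_o, sq]
  · refine tsum_congr fun p => ?_
    rw [ite_not]
    split_ifs with hp
    · rfl
    · rw [integral_exp_neg_mul t (hne_zero p hp)]

end ExpSeries

theorem variance_eigenbasis_expansion_general
    (L σ t : ℝ) (hL : 0 < L) (ht : 0 < t)
    (m : ℕ) (ζ : Fin (m + 1) → ℝ)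
    (lam : ℕ → ℝ) (hlam : ∀ n : ℕ, lam n = (n * π / L) ^ 2)
    (a : ℕ → ℝ) (c : ℕ → Fin (m + 1) → ℝ)
    (habs : ∀ i, Summable fun n => |a n * c n i|) :
    (∀ l₁ l₂ : ℝ, 0 ≤ l₁ → 0 ≤ l₂ → (l₁, l₂) ≠ (0, 0) →
      ∫ s in (0:ℝ)..t, Real.exp (-s * (l₁ + l₂))
        = (1 - Real.exp (-t * (l₁ + l₂))) / (l₁ + l₂)) ∧
    σ ^ 2 * ∫ s in (0:ℝ)..t, ∑ i, ζ i * (∑' n : ℕ, a n * Real.exp (-s * lam n) * c n i) ^ 2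
      = σ ^ 2 * ∑ i, ζ i * ((a 0) ^ 2 * (c 0 i) ^ 2 * t
        + ∑' p : ℕ × ℕ, if p ≠ (0, 0) then
            a p.1 * a p.2
              * ((1 - Real.exp (-t * (lam p.1 + lam p.2))) / (lam p.1 + lam p.2))
              * c p.1 i * c p.2 i
          else 0) := by
  refine ⟨fun l₁ l₂ h₁ h₂ hne => integral_exp_neg_mul t ?_, ?_⟩
  · contrapose! hne
    rw [add_eq_zero_iff_of_nonneg h₁ h₂] at hne
    rw [hne.1, hne.2]
  have hlam_zero : lam 0 = 0 := by simp [hlam]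
  have hlam_pos : ∀ n ≠ 0, 0 < lam n := fun n hn => by
    rw [hlam]
    have : (n : ℝ) ≠ 0 := Nat.cast_ne_zero.mpr hn
    positivity
  have hlam_nonneg : ∀ n, 0 ≤ lam n := fun n => by rw [hlam]; positivity
  simp_rw [mul_right_comm (a _) (rexp _)]
  have hint : ∀ i, IntervalIntegrable
      (fun s => (∑' n, a n * c n i * exp (-s * lam n)) ^ 2) volume 0 t := fun i =>
    (((continuousOn_tsum_mul_exp_neg_mul hlam_nonneg (habs i)).pow 2).mono
      (by simp [Set.uIcc_of_le ht.le, Set.Icc_subset_Ici_self])).intervalIntegrable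
  rw [intervalIntegral.integral_finsetSum fun i _ => (hint i).const_mul (ζ i)]
  simp_rw [intervalIntegral.integral_const_mul,
    integral_sq_tsum_mul_exp_neg_mul hlam_zero hlam_pos (habs _) ht.le]
  congr! 4 with i
  · ring
  · exact tsum_congr fun p => by split_ifs <;> ring

/-- The elementary integral `∫₀ᵗ e^{-s(λ₁+λ₂)} ds = (1-e^{-t(λ₁+λ₂)})/(λ₁+λ₂)` and the
resulting eigenbasis expansion of the variance `σ² ∫₀ᵗ ⟨f, e^{sΔ} Q e^{sΔ} f⟩ ds` of the
Gaussian observable `⟨f, w(·,t)⟩`, where `Q = Σᵢ ζᵢ ⟨·,bᵢ⟩bᵢ`, `aₙ = ⟨eₙ,f⟩`,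
`c n i = ⟨eₙ, bᵢ⟩`, and `λₙ = (nπ/L)²` are the Neumann Laplacian eigenvalues. -/
theorem variance_eigenbasis_expansion
    (L σ t : ℝ) (hL : 0 < L) (hσ : 0 < σ) (ht : 0 < t)
    (m : ℕ) (ζ : Fin (m + 1) → ℝ) (hζ : ∀ i, 0 ≤ ζ i)
    (lam : ℕ → ℝ) (hlam : ∀ n : ℕ, lam n = (n * π / L) ^ 2)
    (a : ℕ → ℝ) (c : ℕ → Fin (m + 1) → ℝ)
    (habs : ∀ i, Summable fun n => |a n * c n i|)
    (hsum : ∀ (i : Fin (m + 1)) (s : ℝ),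
      Summable fun n => a n * Real.exp (-s * lam n) * c n i)
    (hsum2 : ∀ i : Fin (m + 1), Summable fun p : ℕ × ℕ =>
      a p.1 * a p.2 * ((1 - Real.exp (-t * (lam p.1 + lam p.2))) / (lam p.1 + lam p.2))
        * c p.1 i * c p.2 i) :
    (∀ l₁ l₂ : ℝ, 0 ≤ l₁ → 0 ≤ l₂ → (l₁, l₂) ≠ (0, 0) →
      ∫ s in (0:ℝ)..t, Real.exp (-s * (l₁ + l₂))
        = (1 - Real.exp (-t * (l₁ + l₂))) / (l₁ + l₂)) ∧
    σ ^ 2 * ∫ s in (0:ℝ)..t, ∑ i, ζ i * (∑' n : ℕ, a n * Real.exp (-s * lam n) * c n i) ^ 2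
      = σ ^ 2 * ∑ i, ζ i * ((a 0) ^ 2 * (c 0 i) ^ 2 * t
        + ∑' p : ℕ × ℕ, if p ≠ (0, 0) then
            a p.1 * a p.2
              * ((1 - Real.exp (-t * (lam p.1 + lam p.2))) / (lam p.1 + lam p.2))
              * c p.1 i * c p.2 i
          else 0) :=
  variance_eigenbasis_expansion_general L σ t hL ht m ζ lam hlam a c habs
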